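/- arXiv:2210.15380 — 8 statements merged into one kernel-verified Lean document; each statement's English description precedes it below -/
import Mathlib

section
/- Let V be a finite set with |V| = N, let ζ and q be positive integers with 1 ≤ ζ < N, and let μ ∈ (0,1]. Let Σ be a family of ζ-element subsets of V with |Σ| ≥ 2^{−q}·C(N,ζ), where C(N,ζ) is the binomial coefficient. Then there exist a subset F ⊆ V and a nonempty subfamily 🌼 ⊆ Σ such that: (i) F ⊆ S for every S ∈ 🌼; (ii) for every x ∈ V∖F, the number of S ∈ 🌼 with x ∈ S is at most (ζ/N)^{1−μ}·|🌼|; and (iii) |F| ≤ q/(μ·log₂(N/ζ)). -/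
/-!
Greedy extraction: starting from `Sig` with empty core, as long as some point `x` outside the
current core `F` lies in more than a `p = (ζ/N)^(1-μ)` fraction of the current family, pass to
the members containing `x` and add `x` to the core. Each step loses at most a factor `p`, so the
final family has at least `p^|F|·|Sig| ≥ p^|F|·C(N,ζ)/2^q` members. On the other hand, all of
them contain `F`, so there are at most `C(N-|F|, ζ-|F|) ≤ (ζ/N)^|F|·C(N,ζ)` of them. Comparing,
`(N/ζ)^(μ|F|) ≤ 2^q`.
-/

open Finset

namespace Nat

theorem mul_choose_le_mul_succ_choose_succ {n k m j : ℕ} (h : n * (j + 1) ≤ k * (m + 1)) :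
    n * m.choose j ≤ k * (m + 1).choose (j + 1) := by
  refine Nat.le_of_mul_le_mul_left ?_ m.succ_pos
  calc (m + 1) * (n * m.choose j) = n * (j + 1) * (m + 1).choose (j + 1) := by
        rw [mul_left_comm, add_one_mul_choose_eq]; ring
    _ ≤ k * (m + 1) * (m + 1).choose (j + 1) := Nat.mul_le_mul_right _ h
    _ = (m + 1) * (k * (m + 1).choose (j + 1)) := by ring

theorem pow_mul_choose_sub_le {n k t : ℕ} (htk : t ≤ k) (hkn : k ≤ n) :
    n ^ t * (n - t).choose (k - t) ≤ k ^ t * n.choose k := by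
  induction t with
  | zero => simp
  | succ t ih =>
    have hstep : n * (n - (t + 1)).choose (k - (t + 1)) ≤ k * (n - t).choose (k - t) := by
      obtain ⟨m, hm⟩ : ∃ m, n - t = m + 1 := ⟨n - t - 1, by omega⟩
      obtain ⟨j, hj⟩ : ∃ j, k - t = j + 1 := ⟨k - t - 1, by omega⟩
      rw [show n - (t + 1) = m by omega, show k - (t + 1) = j by omega, hm, hj]
      apply mul_choose_le_mul_succ_choose_succ
      rw [← hm, ← hj, Nat.mul_sub, Nat.mul_sub, mul_comm k n]
      exact Nat.sub_le_sub_left (Nat.mul_le_mul_right t hkn) _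
    calc n ^ (t + 1) * (n - (t + 1)).choose (k - (t + 1))
        = n ^ t * (n * (n - (t + 1)).choose (k - (t + 1))) := by ring
      _ ≤ n ^ t * (k * (n - t).choose (k - t)) := Nat.mul_le_mul_left _ hstep
      _ = k * (n ^ t * (n - t).choose (k - t)) := by ring
      _ ≤ k * (k ^ t * n.choose k) := Nat.mul_le_mul_left _ (ih (by omega))
      _ = k ^ (t + 1) * n.choose k := by ring

end Nat

section Sunflower

variable {V : Type*} [Fintype V] [DecidableEq V]

/-- The paper's `(μ, ζ, t)`-sunflowers are the case `p = (ζ/N)^(1-μ)`, `#F ≤ t`. -/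
def IsSunflower (p : ℝ) (F : Finset V) (W : Finset (Finset V)) : Prop :=
  (∀ S ∈ W, F ⊆ S) ∧ ∀ x ∉ F, (#{S ∈ W | x ∈ S} : ℝ) ≤ p * #W

theorem card_le_choose_of_forall_superset {k : ℕ} {F : Finset V} {W : Finset (Finset V)}
    (hcard : ∀ S ∈ W, #S = k) (hF : ∀ S ∈ W, F ⊆ S) :
    #W ≤ (Fintype.card V - #F).choose (k - #F) := by
  rw [← card_compl, ← card_powersetCard]
  refine card_le_card_of_injOn (· \ F) (fun S hS => ?_) fun S hS T hT hST => ?_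
  · rw [mem_coe, mem_powersetCard, card_sdiff_of_subset (hF S hS), hcard S hS]
    exact ⟨fun x hx => mem_compl.2 (mem_sdiff.1 hx).2, rfl⟩
  · rw [← sdiff_union_of_subset (hF S hS), ← sdiff_union_of_subset (hF T hT)]
    exact congrArg (· ∪ F) hST

theorem card_pow_mul_card_le_of_forall_superset {k : ℕ} {F : Finset V}
    {W : Finset (Finset V)} (hW : W.Nonempty) (hcard : ∀ S ∈ W, #S = k)
    (hF : ∀ S ∈ W, F ⊆ S) :
    Fintype.card V ^ #F * #W ≤ k ^ #F * (Fintype.card V).choose k := by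
  obtain ⟨S, hS⟩ := hW
  have hFk : #F ≤ k := hcard S hS ▸ card_le_card (hF S hS)
  have hkV : k ≤ Fintype.card V := hcard S hS ▸ card_le_univ S
  exact (Nat.mul_le_mul_left _ (card_le_choose_of_forall_superset hcard hF)).trans
    (Nat.pow_mul_choose_sub_le hFk hkV)

theorem exists_isSunflower_of_forall_superset {p : ℝ} (hp : 0 ≤ p) (c : ℝ) (F : Finset V)
    (W : Finset (Finset V)) (hW : W.Nonempty) (hF : ∀ S ∈ W, F ⊆ S) (hc : c * p ^ #F ≤ #W) :
    ∃ F' W', W' ⊆ W ∧ W'.Nonempty ∧ IsSunflower p F' W' ∧ c * p ^ #F' ≤ #W' := by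
  by_cases hspread : ∀ x ∉ F, (#{S ∈ W | x ∈ S} : ℝ) ≤ p * #W
  · exact ⟨F, W, subset_rfl, hW, ⟨hF, hspread⟩, hc⟩
  push Not at hspread
  obtain ⟨x, hx, hlt⟩ := hspread
  have hWx : ({S ∈ W | x ∈ S} : Finset _).Nonempty := by
    rw [← card_pos, ← Nat.cast_pos (α := ℝ)]
    exact (by positivity : 0 ≤ p * #W).trans_lt hlt
  have hFx : ∀ S ∈ {S ∈ W | x ∈ S}, insert x F ⊆ S := fun S hS =>
    insert_subset (mem_filter.1 hS).2 (hF S (mem_filter.1 hS).1)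
  have hcx : c * p ^ #(insert x F) ≤ #{S ∈ W | x ∈ S} := by
    rw [card_insert_of_notMem hx, pow_succ, ← mul_assoc, mul_comm _ p]
    exact (mul_le_mul_of_nonneg_left hc hp).trans hlt.le
  obtain ⟨F', W', hW', hW'ne, hsun, hc'⟩ :=
    exists_isSunflower_of_forall_superset hp c (insert x F) _ hWx hFx hcx
  exact ⟨F', W', hW'.trans (filter_subset _ _), hW'ne, hsun, hc'⟩
termination_by Fintype.card V - #F
decreasing_by
  have := card_le_univ (insert x F)
  rw [card_insert_of_notMem hx] at this ⊢
  omega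

theorem exists_isSunflower {p : ℝ} (hp : 0 ≤ p) (Sig : Finset (Finset V)) (hSig : Sig.Nonempty) :
    ∃ F W, W ⊆ Sig ∧ W.Nonempty ∧ IsSunflower p F W ∧ #Sig * p ^ #F ≤ #W :=
  exists_isSunflower_of_forall_superset hp _ ∅ Sig hSig (fun S _ => empty_subset S) (by simp)

end Sunflower

theorem natCast_le_div_mul_logb_inv {r μ c : ℝ} {t q : ℕ} (hr : 0 < r) (hr1 : r < 1)
    (hμ : 0 < μ) (hc : 0 < c) (h : c / 2 ^ q * (r ^ (1 - μ)) ^ t ≤ r ^ t * c) :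
    (t : ℝ) ≤ q / (μ * Real.logb 2 r⁻¹) := by
  have hL : 0 < Real.logb 2 r⁻¹ := Real.logb_pos one_lt_two ((one_lt_inv₀ hr).2 hr1)
  have h' : (r ^ (1 - μ)) ^ t ≤ 2 ^ q * r ^ t := by
    refine le_of_mul_le_mul_left ?_ hc
    calc c * (r ^ (1 - μ)) ^ t = 2 ^ q * (c / 2 ^ q * (r ^ (1 - μ)) ^ t) := by field_simp
      _ ≤ 2 ^ q * (r ^ t * c) := by gcongr
      _ = c * (2 ^ q * r ^ t) := by ring
  have hlog := Real.logb_le_logb_of_le one_lt_two (pow_pos (Real.rpow_pos_of_pos hr _) _) h'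
  rw [Real.logb_pow, Real.logb_rpow_eq_mul_logb_of_pos hr, Real.logb_mul (by positivity)
    (by positivity), Real.logb_pow, Real.logb_pow, Real.logb_self_eq_one one_lt_two,
    ← neg_neg (Real.logb 2 r), ← Real.logb_inv] at hlog
  rw [le_div_iff₀ (by positivity)]
  linarith

theorem stmt_6_general {V : Type*} [Fintype V] [DecidableEq V]
    (N : ℕ) (hN : N = Fintype.card V)
    (ζ q : ℕ) (hζ1 : 1 ≤ ζ) (hζN : ζ < N)
    (μ : ℝ) (hμ0 : 0 < μ)
    (Sig : Finset (Finset V)) (hcard : ∀ S ∈ Sig, S.card = ζ)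
    (hsize : ((N.choose ζ : ℝ) / 2 ^ q) ≤ Sig.card) :
    ∃ (F : Finset V) (W : Finset (Finset V)), W ⊆ Sig ∧ W.Nonempty ∧
      (∀ S ∈ W, F ⊆ S) ∧
      (∀ x : V, x ∉ F →
        ((W.filter (fun S => x ∈ S)).card : ℝ)
          ≤ ((ζ : ℝ) / (N : ℝ)) ^ ((1 : ℝ) - μ) * W.card) ∧
      (F.card : ℝ) ≤ (q : ℝ) / (μ * Real.logb 2 ((N : ℝ) / (ζ : ℝ))) := by
  have hN0 : (0 : ℝ) < N := Nat.cast_pos.2 (by omega)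
  have hr : (0 : ℝ) < ζ / N := by positivity
  have hC : (0 : ℝ) < N.choose ζ := by exact_mod_cast Nat.choose_pos hζN.le
  have hSig : Sig.Nonempty := by
    rw [← card_pos, ← Nat.cast_pos (α := ℝ)]
    exact (by positivity : (0 : ℝ) < N.choose ζ / 2 ^ q).trans_le hsize
  obtain ⟨F, W, hWSig, hW, ⟨hFW, hspread⟩, hbig⟩ :=
    exists_isSunflower (Real.rpow_nonneg hr.le (1 - μ)) Sig hSig
  refine ⟨F, W, hWSig, hW, hFW, hspread, ?_⟩
  have hsmall : (#W : ℝ) ≤ (ζ / N) ^ #F * N.choose ζ := by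
    have := card_pow_mul_card_le_of_forall_superset hW (fun S hS => hcard S (hWSig hS)) hFW
    rw [← hN] at this
    rw [div_pow, div_mul_eq_mul_div, le_div_iff₀ (by positivity), mul_comm]
    exact_mod_cast this
  rw [← inv_div (ζ : ℝ) N]
  refine natCast_le_div_mul_logb_inv hr ((div_lt_one hN0).2 (by exact_mod_cast hζN)) hμ0 hC ?_
  calc (N.choose ζ : ℝ) / 2 ^ q * ((ζ / N) ^ (1 - μ)) ^ #F
      ≤ #Sig * ((ζ / N) ^ (1 - μ)) ^ #F := by gcongr
    _ ≤ #W := hbig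
    _ ≤ (ζ / N) ^ #F * N.choose ζ := hsmall

/-- Sunflower extraction: any large enough family `Sig` of `ζ`-subsets of an
`N`-element set (of size at least `2^{-q}·C(N,ζ)`) contains a nonempty
subfamily `W` forming a `(μ, ζ, q/(μ·log₂(N/ζ)))`-sunflower: all members of `W`
contain a common core `F`, every point outside `F` lies in at most a
`(ζ/N)^{1-μ}` fraction of the members of `W`, and
`|F| ≤ q/(μ·log₂(N/ζ))`. -/
theorem stmt_6 {V : Type*} [Fintype V] [DecidableEq V]
    (N : ℕ) (hN : N = Fintype.card V)
    (ζ q : ℕ) (hζ1 : 1 ≤ ζ) (hζN : ζ < N) (hq : 1 ≤ q)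
    (μ : ℝ) (hμ0 : 0 < μ) (hμ1 : μ ≤ 1)
    (Sig : Finset (Finset V)) (hcard : ∀ S ∈ Sig, S.card = ζ)
    (hsize : ((N.choose ζ : ℝ) / 2 ^ q) ≤ Sig.card) :
    ∃ (F : Finset V) (W : Finset (Finset V)), W ⊆ Sig ∧ W.Nonempty ∧
      (∀ S ∈ W, F ⊆ S) ∧
      (∀ x : V, x ∉ F →
        ((W.filter (fun S => x ∈ S)).card : ℝ)
          ≤ ((ζ : ℝ) / (N : ℝ)) ^ ((1 : ℝ) - μ) * W.card) ∧
      (F.card : ℝ) ≤ (q : ℝ) / (μ * Real.logb 2 ((N : ℝ) / (ζ : ℝ))) :=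
  stmt_6_general N hN ζ q hζ1 hζN μ hμ0 Sig hcard hsize
end

section
/- Let X and Y be finite sets, let R ⊆ X × Y be a relation, and let ε, m̲, m̄, m̲', m̄' be nonnegative reals such that: every x ∈ X has m̲ ≤ |{y : (x,y) ∈ R}| ≤ m̄; every y ∈ Y has m̲' ≤ |{x : (x,y) ∈ R}| ≤ m̄'; and m̲ ≥ 2εm̄, m̲' ≥ 2εm̄'. Let X_g ⊆ X and Y_g ⊆ Y satisfy |X∖X_g| ≤ ε|X| and |Y∖Y_g| ≤ ε|Y|. Then |R ∩ (X_g × Y_g)| ≥ (1/2)·((m̲ − 2εm̄)·|X| + (m̲' − 2εm̄')·|Y|) ≥ √((m̲ − 2εm̄)(m̲' − 2εm̄'))·√(|X|·|Y|). -/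
/-!
Every pair of `R` outside `Xg ×ˢ Yg` has a bad endpoint. At most `ε|X|` points of `X` are bad,
each of degree at most `mu`, so at most `ε mu |X|` pairs have a bad first coordinate; likewise
at most `ε mu' |Y|` have a bad second one. Averaging the double-counting bounds
`ml |X| ≤ |R|` and `ml' |Y| ≤ |R|` and subtracting gives the first inequality; the second is AM-GM.
-/

open Finset

section Fibers

variable {ι κ : Type*} [DecidableEq κ] (s : Finset ι) (f : ι → κ)

theorem mul_card_le_card_of_le_card_fiber [Fintype κ] {m : ℝ}
    (h : ∀ k, m ≤ #{i ∈ s | f i = k}) : m * Fintype.card κ ≤ #s := by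
  calc m * Fintype.card κ = ∑ _k : κ, m := by simp [mul_comm]
    _ ≤ ∑ k : κ, (#{i ∈ s | f i = k} : ℝ) := sum_le_sum fun k _ => h k
    _ = #s := by
      rw [card_eq_sum_card_fiberwise fun i _ => mem_univ (f i)]
      push_cast
      rfl

theorem card_filter_mem_le_mul_of_card_fiber_le (t : Finset κ) {m : ℝ}
    (h : ∀ k ∈ t, #{i ∈ s | f i = k} ≤ m) : #{i ∈ s | f i ∈ t} ≤ #t * m := by
  calc (#{i ∈ s | f i ∈ t} : ℝ)
      = ∑ k ∈ t, (#{i ∈ {i ∈ s | f i ∈ t} | f i = k} : ℝ) := by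
        rw [card_eq_sum_card_fiberwise (s := {i ∈ s | f i ∈ t}) (t := t)
          fun i hi => (mem_filter.1 hi).2]
        push_cast
        rfl
    _ ≤ ∑ _k ∈ t, m := sum_le_sum fun k hk =>
        le_trans (by gcongr; exact filter_subset _ _) (h k hk)
    _ = #t * m := by simp

end Fibers

theorem card_le_card_filter_and_add_card_filter_not {α : Type*} (s : Finset α)
    (p q : α → Prop) [DecidablePred p] [DecidablePred q] :
    #s ≤ #{a ∈ s | p a ∧ q a} + #{a ∈ s | ¬p a} + #{a ∈ s | ¬q a} := by
  classical
  calc #s ≤ #({a ∈ s | p a ∧ q a} ∪ {a ∈ s | ¬p a} ∪ {a ∈ s | ¬q a}) := by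
        refine card_le_card fun a ha => ?_
        simp only [mem_union, mem_filter]
        tauto
    _ ≤ _ := (card_union_le _ _).trans (Nat.add_le_add_right (card_union_le _ _) _)

theorem Real.sqrt_mul_mul_sqrt_mul_le {a b x y : ℝ} (ha : 0 ≤ a) (hb : 0 ≤ b) (hx : 0 ≤ x)
    (hy : 0 ≤ y) : √(a * b) * √(x * y) ≤ 1 / 2 * (a * x + b * y) := by
  have hax := Real.sq_sqrt (mul_nonneg ha hx)
  have hby := Real.sq_sqrt (mul_nonneg hb hy)
  calc √(a * b) * √(x * y) = √(a * x) * √(b * y) := by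
        rw [← Real.sqrt_mul (by positivity), ← Real.sqrt_mul (by positivity)]
        ring_nf
    _ ≤ 1 / 2 * (a * x + b * y) := by
        nlinarith [two_mul_le_add_sq (√(a * x)) (√(b * y))]

theorem stmt_9_general {X Y : Type*} [Fintype X] [Fintype Y] [DecidableEq X] [DecidableEq Y]
    (R : Finset (X × Y)) (ε ml mu ml' mu' : ℝ)
    (hmu : 0 ≤ mu) (hmu' : 0 ≤ mu')
    (hdegX : ∀ x : X, ml ≤ ((R.filter (fun p => p.1 = x)).card : ℝ) ∧
      ((R.filter (fun p => p.1 = x)).card : ℝ) ≤ mu)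
    (hdegY : ∀ y : Y, ml' ≤ ((R.filter (fun p => p.2 = y)).card : ℝ) ∧
      ((R.filter (fun p => p.2 = y)).card : ℝ) ≤ mu')
    (h1 : 2 * ε * mu ≤ ml) (h2 : 2 * ε * mu' ≤ ml')
    (Xg : Finset X) (Yg : Finset Y)
    (hXg : (((Finset.univ : Finset X) \ Xg).card : ℝ) ≤ ε * Fintype.card X)
    (hYg : (((Finset.univ : Finset Y) \ Yg).card : ℝ) ≤ ε * Fintype.card Y) :
    ((1 / 2) * ((ml - 2 * ε * mu) * (Fintype.card X : ℝ)
          + (ml' - 2 * ε * mu') * (Fintype.card Y : ℝ))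
        ≤ ((R.filter (fun p => p.1 ∈ Xg ∧ p.2 ∈ Yg)).card : ℝ)) ∧
    Real.sqrt ((ml - 2 * ε * mu) * (ml' - 2 * ε * mu'))
        * Real.sqrt ((Fintype.card X : ℝ) * (Fintype.card Y : ℝ))
      ≤ (1 / 2) * ((ml - 2 * ε * mu) * (Fintype.card X : ℝ)
          + (ml' - 2 * ε * mu') * (Fintype.card Y : ℝ)) := by
  refine ⟨?_, Real.sqrt_mul_mul_sqrt_mul_le (by linarith) (by linarith) (by positivity)
    (by positivity)⟩
  have hsplit : (#R : ℝ) ≤ #{p ∈ R | p.1 ∈ Xg ∧ p.2 ∈ Yg} + #{p ∈ R | p.1 ∉ Xg}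
      + #{p ∈ R | p.2 ∉ Yg} := by
    exact_mod_cast card_le_card_filter_and_add_card_filter_not R (·.1 ∈ Xg) (·.2 ∈ Yg)
  have hRX := mul_card_le_card_of_le_card_fiber R Prod.fst fun x => (hdegX x).1
  have hRY := mul_card_le_card_of_le_card_fiber R Prod.snd fun y => (hdegY y).1
  have hBX : (#{p ∈ R | p.1 ∉ Xg} : ℝ) ≤ #(univ \ Xg) * mu := by
    simpa using card_filter_mem_le_mul_of_card_fiber_le R Prod.fst (univ \ Xg)
      fun x _ => (hdegX x).2
  have hBY : (#{p ∈ R | p.2 ∉ Yg} : ℝ) ≤ #(univ \ Yg) * mu' := by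
    simpa using card_filter_mem_le_mul_of_card_fiber_le R Prod.snd (univ \ Yg)
      fun y _ => (hdegY y).2
  nlinarith [mul_le_mul_of_nonneg_right hXg hmu, mul_le_mul_of_nonneg_right hYg hmu']

/-- Counting the good part of a relation: if every `x ∈ X` has degree between
`ml` and `mu`, every `y ∈ Y` has degree between `ml'` and `mu'`, the sets of
bad elements have measure at most `ε`, and `ml ≥ 2εmu`, `ml' ≥ 2εmu'`, then
`|R ∩ (X_g × Y_g)| ≥ (1/2)((ml − 2εmu)|X| + (ml' − 2εmu')|Y|)
  ≥ √((ml − 2εmu)(ml' − 2εmu'))·√(|X||Y|)`. -/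
theorem stmt_9 {X Y : Type*} [Fintype X] [Fintype Y] [DecidableEq X] [DecidableEq Y]
    (R : Finset (X × Y)) (ε ml mu ml' mu' : ℝ)
    (hε : 0 ≤ ε) (hml : 0 ≤ ml) (hmu : 0 ≤ mu) (hml' : 0 ≤ ml') (hmu' : 0 ≤ mu')
    (hdegX : ∀ x : X, ml ≤ ((R.filter (fun p => p.1 = x)).card : ℝ) ∧
      ((R.filter (fun p => p.1 = x)).card : ℝ) ≤ mu)
    (hdegY : ∀ y : Y, ml' ≤ ((R.filter (fun p => p.2 = y)).card : ℝ) ∧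
      ((R.filter (fun p => p.2 = y)).card : ℝ) ≤ mu')
    (h1 : 2 * ε * mu ≤ ml) (h2 : 2 * ε * mu' ≤ ml')
    (Xg : Finset X) (Yg : Finset Y)
    (hXg : (((Finset.univ : Finset X) \ Xg).card : ℝ) ≤ ε * Fintype.card X)
    (hYg : (((Finset.univ : Finset Y) \ Yg).card : ℝ) ≤ ε * Fintype.card Y) :
    ((1 / 2) * ((ml - 2 * ε * mu) * (Fintype.card X : ℝ)
          + (ml' - 2 * ε * mu') * (Fintype.card Y : ℝ))
        ≤ ((R.filter (fun p => p.1 ∈ Xg ∧ p.2 ∈ Yg)).card : ℝ)) ∧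
    Real.sqrt ((ml - 2 * ε * mu) * (ml' - 2 * ε * mu'))
        * Real.sqrt ((Fintype.card X : ℝ) * (Fintype.card Y : ℝ))
      ≤ (1 / 2) * ((ml - 2 * ε * mu) * (Fintype.card X : ℝ)
          + (ml' - 2 * ε * mu') * (Fintype.card Y : ℝ)) :=
  stmt_9_general R ε ml mu ml' mu' hmu hmu' hdegX hdegY h1 h2 Xg Yg hXg hYg
end

section
/- Let H be a finite-dimensional complex inner product space, let P be an orthogonal projection on H, and let α, β ∈ H be unit vectors. Suppose ‖Pα‖² ≤ ε and ‖(1−P)β‖² ≤ ε for some ε with 0 ≤ ε ≤ 1/2. Then |⟨α, β⟩| ≤ √(‖Pα‖²·(1 − ‖(1−P)β‖²)) + √(‖(1−P)β‖²·(1 − ‖Pα‖²)) ≤ 2√(ε(1−ε)). -/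
open scoped InnerProductSpace

/-- If `P` is an orthogonal projection on a finite-dimensional complex inner
product space, `α, β` are unit vectors with `‖Pα‖² ≤ ε` and `‖(1-P)β‖² ≤ ε`
where `0 ≤ ε ≤ 1/2`, then
`|⟨α,β⟩| ≤ √(‖Pα‖²(1-‖(1-P)β‖²)) + √(‖(1-P)β‖²(1-‖Pα‖²)) ≤ 2√(ε(1-ε))`. -/
theorem stmt_10 {H : Type*} [NormedAddCommGroup H] [InnerProductSpace ℂ H]
    [FiniteDimensional ℂ H]
    (P : H →ₗ[ℂ] H) (hidem : P ∘ₗ P = P)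
    (hadj : ∀ x y : H, ⟪P x, y⟫_ℂ = ⟪x, P y⟫_ℂ)
    (α β : H) (hα : ‖α‖ = 1) (hβ : ‖β‖ = 1)
    (ε : ℝ) (hε0 : 0 ≤ ε) (hε2 : ε ≤ 1 / 2)
    (hPα : ‖P α‖ ^ 2 ≤ ε) (hPβ : ‖β - P β‖ ^ 2 ≤ ε) :
    ‖⟪α, β⟫_ℂ‖
        ≤ Real.sqrt (‖P α‖ ^ 2 * (1 - ‖β - P β‖ ^ 2))
          + Real.sqrt (‖β - P β‖ ^ 2 * (1 - ‖P α‖ ^ 2)) ∧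
    Real.sqrt (‖P α‖ ^ 2 * (1 - ‖β - P β‖ ^ 2))
          + Real.sqrt (‖β - P β‖ ^ 2 * (1 - ‖P α‖ ^ 2))
      ≤ 2 * Real.sqrt (ε * (1 - ε)) := by
  have hPP : ∀ x : H, P (P x) = P x := fun x => DFunLike.congr_fun hidem x
  -- cross terms vanish
  have h1 : ⟪P α, β - P β⟫_ℂ = 0 := by
    rw [hadj]
    have : P (β - P β) = 0 := by rw [map_sub, hPP, sub_self]
    rw [this, inner_zero_right]
  have h2 : ⟪α - P α, P β⟫_ℂ = 0 := by
    rw [← hPP β, ← hadj]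
    have : P (α - P α) = 0 := by rw [map_sub, hPP, sub_self]
    rw [this, inner_zero_left]
  -- decomposition of the inner product
  have hdecomp : ⟪α, β⟫_ℂ = ⟪P α, P β⟫_ℂ + ⟪α - P α, β - P β⟫_ℂ := by
    have hα' : α = P α + (α - P α) := by abel
    have hβ' : β = P β + (β - P β) := by abel
    calc ⟪α, β⟫_ℂ = ⟪P α + (α - P α), P β + (β - P β)⟫_ℂ := by rw [← hα', ← hβ']
      _ = ⟪P α, P β⟫_ℂ + ⟪P α, β - P β⟫_ℂ + (⟪α - P α, P β⟫_ℂ + ⟪α - P α, β - P β⟫_ℂ) := by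
            rw [inner_add_left, inner_add_right, inner_add_right]
      _ = ⟪P α, P β⟫_ℂ + ⟪α - P α, β - P β⟫_ℂ := by rw [h1, h2]; ring
  -- Pythagoras
  have pythα : ‖P α‖ ^ 2 + ‖α - P α‖ ^ 2 = 1 := by
    have h0 : ⟪P α, α - P α⟫_ℂ = 0 := by
      rw [hadj]
      have : P (α - P α) = 0 := by rw [map_sub, hPP, sub_self]
      rw [this, inner_zero_right]
    have := norm_add_sq_eq_norm_sq_add_norm_sq_of_inner_eq_zero (P α) (α - P α) h0
    have he : P α + (α - P α) = α := by abel
    rw [he, hα] at this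
    simpa [sq] using this.symm
  have pythβ : ‖P β‖ ^ 2 + ‖β - P β‖ ^ 2 = 1 := by
    have h0 : ⟪P β, β - P β⟫_ℂ = 0 := by
      rw [hadj]
      have : P (β - P β) = 0 := by rw [map_sub, hPP, sub_self]
      rw [this, inner_zero_right]
    have := norm_add_sq_eq_norm_sq_add_norm_sq_of_inner_eq_zero (P β) (β - P β) h0
    have he : P β + (β - P β) = β := by abel
    rw [he, hβ] at this
    simpa [sq] using this.symm
  set a := ‖P α‖ ^ 2 with ha_def
  set b := ‖β - P β‖ ^ 2 with hb_def
  have ha0 : 0 ≤ a := sq_nonneg _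
  have hb0 : 0 ≤ b := sq_nonneg _
  have hPβnorm : ‖P β‖ = Real.sqrt (1 - b) := by
    rw [show (1 : ℝ) - b = ‖P β‖ ^ 2 by linarith [pythβ], Real.sqrt_sq (norm_nonneg _)]
  have hQαnorm : ‖α - P α‖ = Real.sqrt (1 - a) := by
    rw [show (1 : ℝ) - a = ‖α - P α‖ ^ 2 by linarith [pythα], Real.sqrt_sq (norm_nonneg _)]
  constructor
  · calc ‖⟪α, β⟫_ℂ‖ ≤ ‖⟪P α, P β⟫_ℂ‖ + ‖⟪α - P α, β - P β⟫_ℂ‖ := by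
          rw [hdecomp]; exact norm_add_le _ _
      _ ≤ ‖P α‖ * ‖P β‖ + ‖α - P α‖ * ‖β - P β‖ := by
          gcongr <;> exact norm_inner_le_norm _ _
      _ = Real.sqrt (a * (1 - b)) + Real.sqrt (b * (1 - a)) := by
          rw [Real.sqrt_mul ha0, Real.sqrt_mul hb0, ha_def, hb_def,
            Real.sqrt_sq (norm_nonneg _), Real.sqrt_sq (norm_nonneg _),
            ← ha_def, ← hb_def, hPβnorm, hQαnorm]
          ring
  · -- second inequality
    have hx0 : 0 ≤ a * (1 - b) := mul_nonneg ha0 (by nlinarith [sq_nonneg (‖P β‖)])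
    have hy0 : 0 ≤ b * (1 - a) := mul_nonneg hb0 (by nlinarith [sq_nonneg (‖α - P α‖)])
    have hsum : a * (1 - b) + b * (1 - a) ≤ 2 * (ε * (1 - ε)) := by nlinarith
    set s := Real.sqrt (a * (1 - b)) with hs_def
    set t := Real.sqrt (b * (1 - a)) with ht_def
    set u := Real.sqrt (ε * (1 - ε)) with hu_def
    have hε1 : 0 ≤ ε * (1 - ε) := mul_nonneg hε0 (by linarith)
    have hs2 : s ^ 2 = a * (1 - b) := Real.sq_sqrt hx0
    have ht2 : t ^ 2 = b * (1 - a) := Real.sq_sqrt hy0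
    have hu2 : u ^ 2 = ε * (1 - ε) := Real.sq_sqrt hε1
    have hs0 : 0 ≤ s := Real.sqrt_nonneg _
    have ht0 : 0 ≤ t := Real.sqrt_nonneg _
    have hu0 : 0 ≤ u := Real.sqrt_nonneg _
    have hkey : (s + t) ^ 2 ≤ (2 * u) ^ 2 := by nlinarith [sq_nonneg (s - t)]
    calc s + t = Real.sqrt ((s + t) ^ 2) := (Real.sqrt_sq (by positivity)).symm
      _ ≤ Real.sqrt ((2 * u) ^ 2) := Real.sqrt_le_sqrt hkey
      _ = 2 * u := Real.sqrt_sq (by positivity)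
end

section
/- Let ρ be a positive semidefinite Hermitian matrix indexed by a finite set Z that is partitioned into disjoint subsets X and Y (Z = X ∪ Y, X ∩ Y = ∅). Let R ⊆ X × Y be a relation, let ℓ : Z → ℝ_{>0}, and let L > 0. Assume: for every x ∈ X, |{y : (x,y) ∈ R}| ≤ ℓ(x); for every y ∈ Y, |{x : (x,y) ∈ R}| ≤ ℓ(y); and ℓ(x)·ℓ(y) ≤ L for every (x,y) ∈ R. Then ∑_{(x,y) ∈ R} |ρ_{xy}| ≤ (√L / 2)·tr(ρ). -/
/-!
A 2×2 principal submatrix of `ρ` is positive semidefinite, so `|ρ_xy|² ≤ ρ_xx ρ_yy`, and by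
AM-GM together with `ℓ(x) ℓ(y) ≤ L` this gives `|ρ_xy| ≤ (√L/2) (ρ_xx/ℓ(x) + ρ_yy/ℓ(y))` on `R`.
Summing over `R`, each `x ∈ X` occurs in at most `ℓ(x)` pairs and each `y ∈ Y` in at most `ℓ(y)`,
so the weights `1/ℓ` cancel against the degrees, leaving `(√L/2) (∑_X ρ_xx + ∑_Y ρ_yy)`,
which is at most `(√L/2) tr ρ` because `X` and `Y` are disjoint and the diagonal is nonnegative.
-/

open Finset
open scoped ComplexOrder

namespace Matrix.PosSemidef

variable {n 𝕜 : Type*} [RCLike 𝕜] {A : Matrix n n 𝕜}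

theorem norm_sq_apply_le (hA : A.PosSemidef) (i j : n) :
    ‖A i j‖ ^ 2 ≤ RCLike.re (A i i) * RCLike.re (A j j) := by
  have hdet := (hA.submatrix ![i, j]).det_nonneg
  have hji : A j i = star (A i j) := by
    simpa using (congrFun (congrFun hA.isHermitian j) i).symm
  simp only [det_fin_two, submatrix_apply, Matrix.cons_val_zero, Matrix.cons_val_one, hji,
    RCLike.star_def, RCLike.mul_conj, sub_nonneg] at hdet
  have hii := (RCLike.nonneg_iff.mp (hA.diag_nonneg (i := i))).2
  simpa [hii] using (RCLike.le_iff_re_im.mp hdet).1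

theorem norm_apply_le_sqrt (hA : A.PosSemidef) (i j : n) :
    ‖A i j‖ ≤ √(RCLike.re (A i i) * RCLike.re (A j j)) :=
  Real.le_sqrt_of_sq_le (hA.norm_sq_apply_le i j)

end Matrix.PosSemidef

theorem Real.two_mul_sqrt_mul_le {a b u v L : ℝ} (ha : 0 ≤ a) (hb : 0 ≤ b) (hu : 0 < u)
    (hv : 0 < v) (h : u * v ≤ L) : 2 * √(a * b) ≤ √L * (a / u + b / v) := by
  have amgm : 2 * √(a / u * (b / v)) ≤ a / u + b / v := by
    have hp : 0 ≤ a / u := by positivity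
    have hq : 0 ≤ b / v := by positivity
    rw [Real.sqrt_mul hp]
    nlinarith [sq_nonneg (√(a / u) - √(b / v)), Real.sq_sqrt hp, Real.sq_sqrt hq]
  calc 2 * √(a * b) = √(u * v) * (2 * √(a / u * (b / v))) := by
        rw [← mul_left_comm, ← Real.sqrt_mul (by positivity)]
        congr 2
        field_simp
    _ ≤ √L * (a / u + b / v) := by gcongr

theorem Finset.sum_div_le_sum_of_card_fiber_le {ι α : Type*} [DecidableEq α] {R : Finset ι}
    {X : Finset α} {g : ι → α} {f ℓ : α → ℝ} (hg : ∀ p ∈ R, g p ∈ X) (hf : ∀ x ∈ X, 0 ≤ f x)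
    (hdeg : ∀ x ∈ X, (#{p ∈ R | g p = x} : ℝ) ≤ ℓ x) :
    ∑ p ∈ R, f (g p) / ℓ (g p) ≤ ∑ x ∈ X, f x := by
  rw [← sum_fiberwise_of_maps_to hg]
  refine sum_le_sum fun x hx => ?_
  rw [sum_congr rfl fun p hp => by rw [(mem_filter.mp hp).2], sum_const, nsmul_eq_mul,
    ← mul_div_assoc]
  have hℓ : 0 ≤ ℓ x := (Nat.cast_nonneg _).trans (hdeg x hx)
  exact div_le_of_le_mul₀ hℓ (hf x hx) (by rw [mul_comm]; gcongr; exacts [hf x hx, hdeg x hx])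

theorem stmt_12_general {Z : Type*} [Fintype Z] [DecidableEq Z]
    (X Y : Finset Z) (hdisj : X ∩ Y = ∅)
    (ρ : Matrix Z Z ℂ) (hρ : ρ.PosSemidef)
    (R : Finset (Z × Z)) (hR : ∀ p ∈ R, p.1 ∈ X ∧ p.2 ∈ Y)
    (ℓ : Z → ℝ) (hℓ : ∀ z, 0 < ℓ z) (L : ℝ)
    (hdegX : ∀ x ∈ X, ((R.filter (fun p => p.1 = x)).card : ℝ) ≤ ℓ x)
    (hdegY : ∀ y ∈ Y, ((R.filter (fun p => p.2 = y)).card : ℝ) ≤ ℓ y)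
    (hprod : ∀ p ∈ R, ℓ p.1 * ℓ p.2 ≤ L) :
    ∑ p ∈ R, ‖ρ p.1 p.2‖
      ≤ (Real.sqrt L / 2) * (Matrix.trace ρ).re := by
  set d : Z → ℝ := fun z => (ρ z z).re
  have hd (z : Z) : 0 ≤ d z := (Complex.nonneg_iff.mp hρ.diag_nonneg).1
  have hentry (p) (hp : p ∈ R) : ‖ρ p.1 p.2‖ ≤ √L / 2 * (d p.1 / ℓ p.1 + d p.2 / ℓ p.2) := by
    have hcs := hρ.norm_apply_le_sqrt p.1 p.2
    have hamgm := Real.two_mul_sqrt_mul_le (hd p.1) (hd p.2) (hℓ _) (hℓ _) (hprod p hp)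
    simp only [RCLike.re_to_complex] at hcs
    linarith
  have htrace : ∑ x ∈ X, d x + ∑ y ∈ Y, d y ≤ (ρ.trace).re := by
    rw [← sum_union (disjoint_iff_inter_eq_empty.mpr hdisj), Matrix.trace, Complex.re_sum]
    exact sum_le_univ_sum_of_nonneg fun z => hd z
  calc ∑ p ∈ R, ‖ρ p.1 p.2‖
      ≤ ∑ p ∈ R, √L / 2 * (d p.1 / ℓ p.1 + d p.2 / ℓ p.2) := sum_le_sum hentry
    _ = √L / 2 * (∑ p ∈ R, d p.1 / ℓ p.1 + ∑ p ∈ R, d p.2 / ℓ p.2) := by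
      rw [← mul_sum, sum_add_distrib]
    _ ≤ √L / 2 * (∑ x ∈ X, d x + ∑ y ∈ Y, d y) := by
      gcongr
      · exact sum_div_le_sum_of_card_fiber_le (fun p hp => (hR p hp).1) (fun x _ => hd x) hdegX
      · exact sum_div_le_sum_of_card_fiber_le (fun p hp => (hR p hp).2) (fun y _ => hd y) hdegY
    _ ≤ √L / 2 * (ρ.trace).re := by gcongr

/-- Summing the basic PSD entry bound over a relation: if `Z = X ⊔ Y`, `ρ` is
positive semidefinite, `R ⊆ X × Y`, the `R`-degrees are bounded by `ℓ`, and
`ℓ(x)·ℓ(y) ≤ L` on `R`, then `∑_{(x,y)∈R} |ρ_{xy}| ≤ (√L/2)·tr ρ`. -/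
theorem stmt_12 {Z : Type*} [Fintype Z] [DecidableEq Z]
    (X Y : Finset Z) (hXY : X ∪ Y = Finset.univ) (hdisj : X ∩ Y = ∅)
    (ρ : Matrix Z Z ℂ) (hρ : ρ.PosSemidef)
    (R : Finset (Z × Z)) (hR : ∀ p ∈ R, p.1 ∈ X ∧ p.2 ∈ Y)
    (ℓ : Z → ℝ) (hℓ : ∀ z, 0 < ℓ z) (L : ℝ) (hL : 0 < L)
    (hdegX : ∀ x ∈ X, ((R.filter (fun p => p.1 = x)).card : ℝ) ≤ ℓ x)
    (hdegY : ∀ y ∈ Y, ((R.filter (fun p => p.2 = y)).card : ℝ) ≤ ℓ y)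
    (hprod : ∀ p ∈ R, ℓ p.1 * ℓ p.2 ≤ L) :
    ∑ p ∈ R, ‖ρ p.1 p.2‖
      ≤ (Real.sqrt L / 2) * (Matrix.trace ρ).re :=
  stmt_12_general X Y hdisj ρ hρ R hR ℓ hℓ L hdegX hdegY hprod
end

section
/- Let K ≥ 1 and δ ≥ 0 be real numbers, let r be a natural number with r·K·δ < 1, and let p₁, …, p_r be nonnegative reals with |p_i − 1/K| ≤ δ for each i. Then |∏_{i=1}^{r} p_i − (1/K)^r| ≤ (1/K)^r · (rKδ + (rKδ)²/(1 − rKδ)). -/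
/-!
Write `ε = Kδ`, so that every `p i` lies in `[(1 - ε)/K, (1 + ε)/K]`. The product then lies
between `(1 - ε)^r / K^r` and `(1 + ε)^r / K^r`. Bernoulli gives `(1 - ε)^r ≥ 1 - rε`, and
`(1 + ε)^r ≤ exp (rε) ≤ 1/(1 - rε)`; both deviations are at most `1/(1 - rε) - 1`, which is
`rε + (rε)²/(1 - rε)`.
-/

open Finset

theorem one_sub_mul_le_one_sub_pow {ε : ℝ} (hε : ε ≤ 2) (n : ℕ) : 1 - n * ε ≤ (1 - ε) ^ n := by
  simpa [sub_eq_add_neg] using one_add_mul_le_pow (a := -ε) (by linarith) n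

theorem one_add_pow_le_one_div_one_sub_mul {ε : ℝ} (hε : 0 ≤ ε) {n : ℕ} (hn : n * ε < 1) :
    (1 + ε) ^ n ≤ 1 / (1 - n * ε) :=
  calc (1 + ε) ^ n ≤ Real.exp ε ^ n := by
        gcongr
        linarith [Real.add_one_le_exp ε]
    _ = Real.exp (n * ε) := (Real.exp_nat_mul ε n).symm
    _ ≤ 1 / (1 - n * ε) := Real.exp_bound_div_one_sub_of_interval (by positivity) hn

theorem add_sq_div_one_sub {x : ℝ} (hx : x ≠ 1) : x + x ^ 2 / (1 - x) = 1 / (1 - x) - 1 := by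
  have : 1 - x ≠ 0 := sub_ne_zero.mpr hx.symm
  field_simp
  ring

theorem abs_prod_sub_pow_le {ι : Type*} [Fintype ι] {c ε : ℝ} (hc : 0 ≤ c) (hε : 0 ≤ ε)
    (hnε : Fintype.card ι * ε < 1) {p : ι → ℝ} (hp : ∀ i, |p i - c| ≤ c * ε) :
    |(∏ i, p i) - c ^ Fintype.card ι| ≤ c ^ Fintype.card ι * (1 / (1 - Fintype.card ι * ε) - 1) := by
  rcases isEmpty_or_nonempty ι with _ | _
  · simp
  set n := Fintype.card ι
  have hε1 : ε < 1 := by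
    have : (1 : ℝ) ≤ n := by exact_mod_cast Fintype.card_pos
    nlinarith
  have hlower_nonneg : 0 ≤ c * (1 - ε) := mul_nonneg hc (by linarith)
  have hlower : ∀ i, c * (1 - ε) ≤ p i := fun i => by
    linarith [(abs_le.mp (hp i)).1]
  have hupper : ∀ i, p i ≤ c * (1 + ε) := fun i => by
    linarith [(abs_le.mp (hp i)).2]
  have hprod_lower : c ^ n * (1 - n * ε) ≤ ∏ i, p i :=
    calc c ^ n * (1 - n * ε) ≤ c ^ n * (1 - ε) ^ n := by
          gcongr
          exact one_sub_mul_le_one_sub_pow (by linarith) n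
      _ = ∏ _i : ι, c * (1 - ε) := by rw [prod_const, card_univ, mul_pow]
      _ ≤ ∏ i, p i := prod_le_prod (fun _ _ => hlower_nonneg) (fun i _ => hlower i)
  have hprod_upper : ∏ i, p i ≤ c ^ n * (1 / (1 - n * ε)) :=
    calc ∏ i, p i ≤ ∏ _i : ι, c * (1 + ε) :=
          prod_le_prod (fun i _ => hlower_nonneg.trans (hlower i)) (fun i _ => hupper i)
      _ = c ^ n * (1 + ε) ^ n := by rw [prod_const, card_univ, mul_pow]
      _ ≤ c ^ n * (1 / (1 - n * ε)) := by
          gcongr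
          exact one_add_pow_le_one_div_one_sub_mul hε hnε
  have hnε_le : n * ε ≤ 1 / (1 - n * ε) - 1 := by
    rw [← add_sq_div_one_sub hnε.ne]
    have : 0 < 1 - n * ε := by linarith
    linarith [show 0 ≤ (n * ε) ^ 2 / (1 - n * ε) by positivity]
  rw [abs_sub_le_iff]
  constructor
  · linarith
  · linarith [mul_le_mul_of_nonneg_left hnε_le (pow_nonneg hc n)]

theorem stmt_13_general (K δ : ℝ) (hK : 1 ≤ K) (hδ : 0 ≤ δ)
    (r : ℕ) (hr : (r : ℝ) * K * δ < 1)
    (p : Fin r → ℝ) (hp : ∀ i, |p i - 1 / K| ≤ δ) :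
    |(∏ i, p i) - (1 / K) ^ r|
      ≤ (1 / K) ^ r * ((r : ℝ) * K * δ
          + ((r : ℝ) * K * δ) ^ 2 / (1 - (r : ℝ) * K * δ)) := by
  have hK0 : 0 < K := one_pos.trans_le hK
  have hrel : ∀ i, |p i - 1 / K| ≤ 1 / K * (K * δ) := by
    intro i
    rw [← mul_assoc, one_div_mul_cancel hK0.ne', one_mul]
    exact hp i
  rw [mul_assoc] at hr ⊢
  rw [add_sq_div_one_sub hr.ne]
  simpa using abs_prod_sub_pow_le (by positivity) (by positivity) (by simpa using hr) hrel

/-- If each `p i` is within `δ` of `1/K` and `rKδ < 1`, then the product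
`∏ p i` is within `(1/K)^r·(rKδ + (rKδ)²/(1 − rKδ))` of `(1/K)^r`. -/
theorem stmt_13 (K δ : ℝ) (hK : 1 ≤ K) (hδ : 0 ≤ δ)
    (r : ℕ) (hr : (r : ℝ) * K * δ < 1)
    (p : Fin r → ℝ) (hp0 : ∀ i, 0 ≤ p i) (hp : ∀ i, |p i - 1 / K| ≤ δ) :
    |(∏ i, p i) - (1 / K) ^ r|
      ≤ (1 / K) ^ r * ((r : ℝ) * K * δ
          + ((r : ℝ) * K * δ) ^ 2 / (1 - (r : ℝ) * K * δ)) :=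
  stmt_13_general K δ hK hδ r hr p hp
end

section
/- Let x ≥ 0 be a real number and let r be a natural number with r·x < 1. Then (1 + x)^r ≤ 1 + rx + (rx)²/(1 − rx). -/
/-! `(1 + x)^r ≤ e^{rx} ≤ 1 / (1 - rx)`, and `1 / (1 - t) = 1 + t + t² / (1 - t)`. -/

open Real

lemma Real.exp_le_one_div_one_sub {y : ℝ} (hy : y < 1) : exp y ≤ 1 / (1 - y) := by
  rw [le_div_iff₀ (sub_pos.2 hy)]
  calc exp y * (1 - y) ≤ exp y * exp (-y) := by gcongr; exact one_sub_le_exp_neg y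
    _ = 1 := by rw [← exp_add, add_neg_cancel, exp_zero]

lemma one_add_pow_le_one_div_one_sub_mul_s14 {x : ℝ} (hx : -1 ≤ x) {r : ℕ} (hr : (r : ℝ) * x < 1) :
    (1 + x) ^ r ≤ 1 / (1 - r * x) :=
  calc (1 + x) ^ r ≤ exp x ^ r := by
        gcongr
        · linarith
        · linarith [add_one_le_exp x]
    _ = exp (r * x) := (exp_nat_mul x r).symm
    _ ≤ 1 / (1 - r * x) := exp_le_one_div_one_sub hr

/-- For `x ≥ 0` and `rx < 1`, `(1+x)^r ≤ 1 + rx + (rx)²/(1 − rx)`. -/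
theorem stmt_14 (x : ℝ) (hx : 0 ≤ x) (r : ℕ) (hr : (r : ℝ) * x < 1) :
    (1 + x) ^ r ≤ 1 + (r : ℝ) * x + ((r : ℝ) * x) ^ 2 / (1 - (r : ℝ) * x) := by
  have hexpand : 1 + (r : ℝ) * x + ((r : ℝ) * x) ^ 2 / (1 - r * x) = 1 / (1 - r * x) := by
    field_simp [(sub_pos.2 hr).ne']
    ring
  rw [hexpand]
  exact one_add_pow_le_one_div_one_sub_mul_s14 (by linarith) hr
end

section
/- Let K and m be positive integers, let T = 100·m, and assume K ≥ T² + T. Let X₁, …, X_T be independent uniformly distributed random elements of a set of size K. Then the probability that the set {X₁, …, X_T} contains fewer than m distinct elements is at most exp(−T/16). -/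
open Finset

/-- Coupon-collector-type bound: `T = 100m` iid uniform samples from a set of
size `K ≥ T² + T` contain fewer than `m` distinct elements with probability at
most `exp(−T/16)`. The probability is expressed by counting sample sequences
`g : Fin T → Fin K`, each occurring with probability `K^{-T}`. -/
theorem stmt_16 (K m : ℕ) (hK : 0 < K) (hm : 0 < m)
    (T : ℕ) (hT : T = 100 * m) (hKT : T ^ 2 + T ≤ K) :
    (((Finset.univ : Finset (Fin T → Fin K)).filter
        (fun g => ((Finset.univ : Finset (Fin T)).image g).card < m)).card : ℝ)
        / (K : ℝ) ^ T
      ≤ Real.exp (-(T : ℝ) / 16) := by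
  have hmT : m ≤ T := by omega
  have hTK : T ≤ K := by nlinarith
  -- counting bound
  have hcount : (((Finset.univ : Finset (Fin T → Fin K)).filter
        (fun g => ((Finset.univ : Finset (Fin T)).image g).card < m)).card : ℕ)
      ≤ K.choose (m - 1) * (m - 1) ^ T := by
    have hsub : ((Finset.univ : Finset (Fin T → Fin K)).filter
        (fun g => ((Finset.univ : Finset (Fin T)).image g).card < m))
        ⊆ (Finset.powersetCard (m - 1) (univ : Finset (Fin K))).biUnion
          (fun S => Fintype.piFinset fun _ : Fin T => S) := by
      intro g hg
      simp only [mem_filter, mem_univ, true_and] at hg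
      obtain ⟨S, hS1, hS2, hS3⟩ := Finset.exists_subsuperset_card_eq
        (Finset.subset_univ ((Finset.univ : Finset (Fin T)).image g))
        (by omega : ((Finset.univ : Finset (Fin T)).image g).card ≤ m - 1)
        (by simpa using (by omega : m - 1 ≤ K))
      refine Finset.mem_biUnion.2 ⟨S, ?_, ?_⟩
      · exact Finset.mem_powersetCard.2 ⟨hS2, hS3⟩
      · exact Fintype.mem_piFinset.2 fun i => hS1 (Finset.mem_image_of_mem g (mem_univ i))
    calc _ ≤ ((Finset.powersetCard (m - 1) (univ : Finset (Fin K))).biUnion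
          (fun S => Fintype.piFinset fun _ : Fin T => S)).card := Finset.card_le_card hsub
      _ ≤ ∑ S ∈ Finset.powersetCard (m - 1) (univ : Finset (Fin K)),
            (Fintype.piFinset fun _ : Fin T => S).card := Finset.card_biUnion_le
      _ = ∑ S ∈ Finset.powersetCard (m - 1) (univ : Finset (Fin K)), (m - 1) ^ T := by
          refine Finset.sum_congr rfl fun S hS => ?_
          rw [Fintype.card_piFinset_const, (Finset.mem_powersetCard.1 hS).2]
      _ = K.choose (m - 1) * (m - 1) ^ T := by
          rw [Finset.sum_const, smul_eq_mul, Finset.card_powersetCard, Finset.card_univ,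
            Fintype.card_fin]
  have hKpos : (0:ℝ) < (K:ℝ) ^ T := by positivity
  rw [div_le_iff₀ hKpos]
  -- reduce to real inequality
  have h1 : (((Finset.univ : Finset (Fin T → Fin K)).filter
        (fun g => ((Finset.univ : Finset (Fin T)).image g).card < m)).card : ℝ)
      ≤ (K:ℝ) ^ m * (m:ℝ) ^ T := by
    calc _ ≤ ((K.choose (m - 1) * (m - 1) ^ T : ℕ) : ℝ) := by exact_mod_cast hcount
      _ ≤ ((K ^ (m-1) * (m - 1) ^ T : ℕ) : ℝ) := by
          exact_mod_cast Nat.mul_le_mul_right _ (Nat.choose_le_pow K (m-1))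
      _ ≤ ((K ^ m * m ^ T : ℕ) : ℝ) := by
          exact_mod_cast Nat.mul_le_mul (Nat.pow_le_pow_right hK (by omega))
            (Nat.pow_le_pow_left (by omega) T)
      _ = (K:ℝ) ^ m * (m:ℝ) ^ T := by push_cast; ring
  refine h1.trans ?_
  -- key: m^T * exp(T/16) ≤ K^(T-m)
  have hKT2 : ((T:ℝ))^2 ≤ (K:ℝ) := by
    have : (T:ℕ)^2 ≤ K := by omega
    exact_mod_cast this
  have hmpos : (0:ℝ) < m := by exact_mod_cast hm
  have hexp : Real.exp (6.25) ≤ (100:ℝ)^198 := by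
    have h7 : Real.exp (6.25) ≤ Real.exp 7 := Real.exp_le_exp.2 (by norm_num)
    have : Real.exp 7 = (Real.exp 1)^7 := by
      rw [← Real.exp_nat_mul]; norm_num
    have he : Real.exp 1 ≤ 3 := (Real.exp_one_lt_d9.le.trans (by norm_num))
    calc Real.exp 6.25 ≤ (Real.exp 1)^7 := by rw [← this]; exact h7
      _ ≤ 3^7 := by
          apply pow_le_pow_left₀ (Real.exp_pos 1).le he
      _ ≤ (100:ℝ)^198 := by norm_num
  have hbase : (m:ℝ)^100 * Real.exp (6.25) ≤ (100:ℝ)^198 * (m:ℝ)^198 := by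
    have hm1 : (1:ℝ) ≤ m := by exact_mod_cast hm
    have h100 : (m:ℝ)^100 ≤ (m:ℝ)^198 := pow_le_pow_right₀ hm1 (by norm_num)
    calc (m:ℝ)^100 * Real.exp (6.25) ≤ (m:ℝ)^198 * (100:ℝ)^198 := by
          apply mul_le_mul h100 hexp (Real.exp_pos _).le (by positivity)
      _ = (100:ℝ)^198 * (m:ℝ)^198 := by ring
  have hkey : (m:ℝ) ^ T * Real.exp ((T:ℝ)/16) ≤ (K:ℝ) ^ (T - m) := by
    have hTm : T - m = 99 * m := by omega
    have hTreal : (T:ℝ) = 100 * m := by exact_mod_cast hT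
    calc (m:ℝ) ^ T * Real.exp ((T:ℝ)/16)
        = ((m:ℝ)^100 * Real.exp 6.25) ^ m := by
          rw [mul_pow, ← pow_mul, ← Real.exp_nat_mul, hT]
          push_cast; ring_nf
      _ ≤ ((100:ℝ)^198 * (m:ℝ)^198) ^ m := by
          apply pow_le_pow_left₀ (by positivity) hbase
      _ = (((T:ℝ))^2) ^ (99 * m) := by
          rw [hTreal, ← mul_pow, ← pow_mul, ← pow_mul]
          congr 1
          ring
      _ ≤ (K:ℝ) ^ (99 * m) := by
          apply pow_le_pow_left₀ (by positivity) hKT2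
      _ = (K:ℝ) ^ (T - m) := by rw [hTm]
  have hKm : (0:ℝ) < (K:ℝ)^m := by positivity
  have : (K:ℝ) ^ m * (m:ℝ) ^ T * Real.exp ((T:ℝ)/16) ≤ (K:ℝ) ^ m * (K:ℝ) ^ (T - m) := by
    calc (K:ℝ) ^ m * (m:ℝ) ^ T * Real.exp ((T:ℝ)/16)
        = (K:ℝ) ^ m * ((m:ℝ) ^ T * Real.exp ((T:ℝ)/16)) := by ring
      _ ≤ (K:ℝ) ^ m * (K:ℝ) ^ (T - m) := by
          exact mul_le_mul_of_nonneg_left hkey hKm.le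
  have hKTpow : (K:ℝ) ^ m * (K:ℝ) ^ (T - m) = (K:ℝ) ^ T := by
    rw [← pow_add]; congr 1; omega
  rw [hKTpow] at this
  have hepos : (0:ℝ) < Real.exp ((T:ℝ)/16) := Real.exp_pos _
  calc (K:ℝ) ^ m * (m:ℝ) ^ T ≤ (K:ℝ) ^ T / Real.exp ((T:ℝ)/16) := by
        rw [le_div_iff₀ hepos]; exact this
    _ = Real.exp (-(T:ℝ)/16) * (K:ℝ) ^ T := by
        rw [neg_div, Real.exp_neg]; ring
end

section
/- Let V be a finite set with |V| = N, let d be a positive integer, let β > 0, and let f₁, f₂ : V × Fin d → V be two functions (adjacency-list functions of two d-colored graphs on V). Assume: (i) there is a partition of V into parts, each of size at most N/2, such that f₂(v, κ) lies in the same part as v for every v ∈ V and κ ∈ Fin d; and (ii) for every subset C ⊆ V with |C| ≤ N/2, the number of pairs (v, κ) with v ∈ C and f₁(v, κ) ∉ C is at least β·d·|C|. Then the number of pairs (v, κ) ∈ V × Fin d with f₁(v, κ) ≠ f₂(v, κ) is at least β·d·N. -/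
open Finset

/-- If the `d`-colored graph described by `f₂` splits into parts of size at
most `N/2` (no `f₂`-edge leaves a part) while the graph described by `f₁` is a
`β`-edge expander (every set of at most half the vertices has at least a `β`
fraction of its emanating edges leaving it), then the adjacency functions `f₁`
and `f₂` differ on at least `β·d·N` pairs `(v, κ)`. -/
theorem stmt_18 {V : Type*} [Fintype V] [DecidableEq V]
    (N : ℕ) (hN : N = Fintype.card V)
    (d : ℕ) (hd : 0 < d) (β : ℝ) (hβ : 0 < β)
    (f₁ f₂ : V × Fin d → V)
    (hpart : ∃ c : V → ℕ,
      (∀ k : ℕ, 2 * ((Finset.univ : Finset V).filter (fun v => c v = k)).card ≤ N) ∧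
      (∀ v : V, ∀ κ : Fin d, c (f₂ (v, κ)) = c v))
    (hexp : ∀ C : Finset V, 2 * C.card ≤ N →
      β * d * C.card ≤
        (((C ×ˢ (Finset.univ : Finset (Fin d))).filter
          (fun p => f₁ (p.1, p.2) ∉ C)).card : ℝ)) :
    β * d * N ≤
      ((((Finset.univ : Finset (V × Fin d))).filter
        (fun p => f₁ p ≠ f₂ p)).card : ℝ) := by
  classical
  obtain ⟨c, hsize, hsame⟩ := hpart
  set K : Finset ℕ := Finset.image c Finset.univ with hK
  set Cs : ℕ → Finset V := fun k => (Finset.univ : Finset V).filter (fun v => c v = k)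
    with hCs
  set E : ℕ → Finset (V × Fin d) := fun k =>
    ((Cs k ×ˢ (Finset.univ : Finset (Fin d))).filter (fun p => f₁ (p.1, p.2) ∉ Cs k))
    with hEdef
  set T : Finset (V × Fin d) :=
    (Finset.univ : Finset (V × Fin d)).filter (fun p => f₁ p ≠ f₂ p) with hT
  have hmemE : ∀ k p, p ∈ E k → c p.1 = k ∧ c (f₁ (p.1, p.2)) ≠ k := by
    intro k p hp
    simp only [hEdef, Finset.mem_filter, Finset.mem_product, hCs, Finset.mem_univ,
      true_and, and_true] at hp
    exact hp
  have hEsub : ∀ k, E k ⊆ T := by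
    intro k p hp
    obtain ⟨h1, h2⟩ := hmemE k p hp
    simp only [hT, Finset.mem_filter, Finset.mem_univ, true_and]
    intro heq
    apply h2
    have hpe : (p.1, p.2) = p := rfl
    rw [hpe, heq, ← hpe, hsame p.1 p.2, h1]
  have hdisj : (K : Set ℕ).PairwiseDisjoint E := by
    intro k _ k' _ hne
    refine Finset.disjoint_left.2 ?_
    intro p hp hp'
    exact hne ((hmemE k p hp).1 ▸ ((hmemE k' p hp').1).symm ▸ rfl)
  have hcards : ∑ k ∈ K, (E k).card ≤ T.card := by
    rw [← Finset.card_biUnion hdisj]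
    exact Finset.card_le_card (Finset.biUnion_subset.2 fun k _ => hEsub k)
  have hNsum : N = ∑ k ∈ K, (Cs k).card := by
    rw [hN]
    exact Finset.card_eq_sum_card_fiberwise
      (fun v _ => Finset.mem_image_of_mem c (Finset.mem_univ v))
  calc β * d * N = ∑ k ∈ K, β * d * (Cs k).card := by
        rw [hNsum]; push_cast; rw [Finset.mul_sum]
    _ ≤ ∑ k ∈ K, ((E k).card : ℝ) :=
        Finset.sum_le_sum fun k _ => hexp (Cs k) (hsize k)
    _ = ((∑ k ∈ K, (E k).card : ℕ) : ℝ) := by push_cast; ring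
    _ ≤ (T.card : ℝ) := by exact_mod_cast hcards
end
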